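/- Let m, n ≥ 1, 1 ≤ k ≤ min(m,n), let (p̃,q̃) ∈ 𝒫ᵏ_{m,n}, let ε > 0, and let (p,q) ∈ 𝒞_{m,n} with ‖(p−p̃, q−q̃)‖ < ε. Let (w,v) ∈ V_k be a unit vector minimizing ‖S_k(p,q)(·)‖ over unit vectors of V_k, i.e., ‖S_k(p,q)(w,v)‖ ≤ ‖S_k(p,q)(w',v')‖ for every unit (w',v') ∈ V_k. Then ‖S_k(p̃,q̃)(w,v)‖ < 2ε·√(max(m,n) − k + 1). -/

import Mathlib

open Polynomial

/-- The squared ℓ²-norm of the coefficient sequence of a polynomial. -/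
noncomputable def pnormSq (p : ℂ[X]) : ℝ := ∑ i ∈ p.support, ‖p.coeff i‖ ^ 2

/-- The ℓ²-norm of the coefficient sequence of a polynomial. -/
noncomputable def pnorm (p : ℂ[X]) : ℝ := Real.sqrt (pnormSq p)

/-- The ℓ²-norm of a pair of polynomials. -/
noncomputable def pairNorm (p q : ℂ[X]) : ℝ := Real.sqrt (pnormSq p + pnormSq q)

/-- The ℓ²-norm of a triple of polynomials. -/
noncomputable def tripleNorm (p q r : ℂ[X]) : ℝ :=
  Real.sqrt (pnormSq p + pnormSq q + pnormSq r)

/-- The degree of the greatest common divisor of two polynomials. -/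
noncomputable def gcdDeg (p q : ℂ[X]) : ℕ := (EuclideanDomain.gcd p q).natDegree

/-- The set 𝒞_{m,n} of pairs of polynomials of degrees exactly m and n. -/
def Cmn (m n : ℕ) : Set (ℂ[X] × ℂ[X]) :=
  {pq | pq.1.degree = (m : WithBot ℕ) ∧ pq.2.degree = (n : WithBot ℕ)}

/-- The GCD manifold 𝒫ᵏ_{m,n} : pairs in 𝒞_{m,n} whose GCD has degree k. -/
def Pmnk (m n k : ℕ) : Set (ℂ[X] × ℂ[X]) :=
  {pq | pq ∈ Cmn m n ∧ gcdDeg pq.1 pq.2 = k}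

/-- The distance θ_k(p,q) from (p,q) to the GCD manifold 𝒫ᵏ_{m,n}. -/
noncomputable def theta (m n k : ℕ) (p q : ℂ[X]) : ℝ :=
  sInf ((fun rs => pairNorm (p - rs.1) (q - rs.2)) '' Pmnk m n k)

/-- The bilinear Sylvester expression (w,v) ↦ p·w − q·v as a linear map. -/
noncomputable def sylMap (p q : ℂ[X]) : ℂ[X] × ℂ[X] →ₗ[ℂ] ℂ[X] :=
  (LinearMap.mulLeft ℂ p).comp (LinearMap.fst ℂ ℂ[X] ℂ[X]) -
    (LinearMap.mulLeft ℂ q).comp (LinearMap.snd ℂ ℂ[X] ℂ[X])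

/-- The domain V_j = {(w,v) : deg w ≤ n−j, deg v ≤ m−j} of the j-th Sylvester map. -/
noncomputable def Vspace (m n j : ℕ) : Submodule ℂ (ℂ[X] × ℂ[X]) :=
  (Polynomial.degreeLE ℂ ((n - j : ℕ) : WithBot ℕ)).prod
    (Polynomial.degreeLE ℂ ((m - j : ℕ) : WithBot ℕ))

lemma pnormSq_nonneg (p : ℂ[X]) : 0 ≤ pnormSq p :=
  Finset.sum_nonneg fun _ _ => sq_nonneg _

lemma pnorm_nonneg (p : ℂ[X]) : 0 ≤ pnorm p := Real.sqrt_nonneg _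

lemma pnorm_sq (p : ℂ[X]) : pnorm p ^ 2 = pnormSq p := Real.sq_sqrt (pnormSq_nonneg p)

lemma pnormSq_eq_sum (p : ℂ[X]) (s : Finset ℕ) (h : p.support ⊆ s) :
    pnormSq p = ∑ i ∈ s, ‖p.coeff i‖ ^ 2 := by
  refine Finset.sum_subset h fun i _ hi => ?_
  simp [Polynomial.notMem_support_iff.mp hi]

lemma pnormSq_eq_sum_range (p : ℂ[X]) (N : ℕ) (h : p.natDegree < N) :
    pnormSq p = ∑ i ∈ Finset.range N, ‖p.coeff i‖ ^ 2 := by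
  refine pnormSq_eq_sum p _ fun i hi => Finset.mem_range.2 ?_
  exact lt_of_le_of_lt (Polynomial.le_natDegree_of_mem_supp i hi) h

lemma pnormSq_pos (p : ℂ[X]) (hp : p ≠ 0) : 0 < pnormSq p := by
  refine Finset.sum_pos (fun i hi => ?_) ?_
  · have h : p.coeff i ≠ 0 := Polynomial.mem_support_iff.mp hi
    exact pow_pos (norm_pos_iff.mpr h) 2
  · exact Polynomial.nonempty_support_iff.mpr hp

lemma pnorm_pos (p : ℂ[X]) (hp : p ≠ 0) : 0 < pnorm p :=
  Real.sqrt_pos.mpr (pnormSq_pos p hp)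

/-- embed coefficients into Euclidean space -/
noncomputable def toE (N : ℕ) (p : ℂ[X]) : EuclideanSpace ℂ (Fin N) := WithLp.toLp 2 (fun i => p.coeff i)

lemma norm_toE (N : ℕ) (p : ℂ[X]) (h : p.natDegree < N) : ‖toE N p‖ = pnorm p := by
  rw [EuclideanSpace.norm_eq, pnorm, pnormSq_eq_sum_range p N h,
    ← Fin.sum_univ_eq_sum_range (fun i => ‖p.coeff i‖ ^ 2)]
  rfl

lemma pnorm_add_le (p q : ℂ[X]) : pnorm (p + q) ≤ pnorm p + pnorm q := by
  set N := p.natDegree + q.natDegree + (p+q).natDegree + 1 with hN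
  have h1 : p.natDegree < N := by omega
  have h2 : q.natDegree < N := by omega
  have h3 : (p+q).natDegree < N := by omega
  have he : toE N (p + q) = toE N p + toE N q := by
    ext i; simp [toE, Polynomial.coeff_add]
  rw [← norm_toE N _ h3, ← norm_toE N _ h1, ← norm_toE N _ h2, he]
  exact norm_add_le _ _

lemma pnormSq_smul (c : ℂ) (p : ℂ[X]) : pnormSq (c • p) = ‖c‖ ^ 2 * pnormSq p := by
  rw [pnormSq_eq_sum (c • p) p.support (Polynomial.support_smul c p), pnormSq,
    Finset.mul_sum]
  refine Finset.sum_congr rfl fun i _ => ?_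
  simp [Polynomial.coeff_smul, norm_smul, mul_pow]

lemma pnorm_smul (c : ℂ) (p : ℂ[X]) : pnorm (c • p) = ‖c‖ * pnorm p := by
  rw [pnorm, pnormSq_smul, Real.sqrt_mul (by positivity), Real.sqrt_sq (norm_nonneg c)]
  rfl

lemma pnorm_zero : pnorm 0 = 0 := by simp [pnorm, pnormSq]

lemma pnorm_neg (p : ℂ[X]) : pnorm (-p) = pnorm p := by
  have : (-p) = ((-1 : ℂ)) • p := by ring_nf; simp
  rw [this, pnorm_smul]; simp

lemma pnorm_sub_le (p q : ℂ[X]) : pnorm (p - q) ≤ pnorm p + pnorm q := by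
  rw [sub_eq_add_neg]
  exact (pnorm_add_le p (-q)).trans (by rw [pnorm_neg])

lemma pnorm_sum_le {s : Finset ℕ} (f : ℕ → ℂ[X]) :
    pnorm (∑ i ∈ s, f i) ≤ ∑ i ∈ s, pnorm (f i) := by
  classical
  induction s using Finset.induction with
  | empty => simp [pnorm_zero]
  | @insert a s h ih =>
    rw [Finset.sum_insert h, Finset.sum_insert h]
    exact (pnorm_add_le _ _).trans (by linarith)

lemma pnormSq_mul_X_pow (a : ℂ[X]) (i : ℕ) : pnormSq (a * X ^ i) = pnormSq a := by
  have hemb : Function.Injective (· + i) := add_left_injective i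
  rw [pnormSq_eq_sum (a * X ^ i) (a.support.map ⟨_, hemb⟩) ?_]
  · rw [Finset.sum_map, pnormSq]
    refine Finset.sum_congr rfl fun j _ => ?_
    simp [Polynomial.coeff_mul_X_pow]
  · intro j hj
    have hc : (a * X ^ i).coeff j ≠ 0 := Polynomial.mem_support_iff.mp hj
    rw [Polynomial.coeff_mul_X_pow'] at hc
    by_cases hij : i ≤ j
    · simp only [if_pos hij] at hc
      refine Finset.mem_map.2 ⟨j - i, Polynomial.mem_support_iff.mpr hc, ?_⟩
      simp [Nat.sub_add_cancel hij]
    · simp [hij] at hc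

lemma pnorm_mul_X_pow (a : ℂ[X]) (i : ℕ) : pnorm (a * X ^ i) = pnorm a := by
  rw [pnorm, pnormSq_mul_X_pow]; rfl

lemma sum_abs_coeff_le (w : ℂ[X]) (N : ℕ) (h : w.natDegree < N) :
    ∑ i ∈ Finset.range N, ‖w.coeff i‖ ≤ Real.sqrt N * pnorm w := by
  have h1 : (∑ i ∈ Finset.range N, ‖w.coeff i‖) ^ 2 ≤
      N * ∑ i ∈ Finset.range N, ‖w.coeff i‖ ^ 2 := by
    simpa using sq_sum_le_card_mul_sum_sq (s := Finset.range N) (f := fun i => ‖w.coeff i‖)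
  rw [← pnormSq_eq_sum_range w N h] at h1
  have h2 : 0 ≤ ∑ i ∈ Finset.range N, ‖w.coeff i‖ :=
    Finset.sum_nonneg fun _ _ => norm_nonneg _
  calc ∑ i ∈ Finset.range N, ‖w.coeff i‖
      = Real.sqrt ((∑ i ∈ Finset.range N, ‖w.coeff i‖) ^ 2) := (Real.sqrt_sq h2).symm
    _ ≤ Real.sqrt (N * pnormSq w) := Real.sqrt_le_sqrt h1
    _ = Real.sqrt N * pnorm w := Real.sqrt_mul (by positivity) _

lemma pnorm_mul_le (a w : ℂ[X]) (N : ℕ) (h : w.natDegree < N) :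
    pnorm (a * w) ≤ Real.sqrt N * (pnorm a * pnorm w) := by
  have hw : a * w = ∑ i ∈ Finset.range N, (w.coeff i) • (a * X ^ i) := by
    conv_lhs => rw [w.as_sum_range' N h]
    rw [Finset.mul_sum]
    refine Finset.sum_congr rfl fun i _ => ?_
    rw [Polynomial.smul_eq_C_mul, ← Polynomial.C_mul_X_pow_eq_monomial]
    ring
  rw [hw]
  calc pnorm (∑ i ∈ Finset.range N, (w.coeff i) • (a * X ^ i))
      ≤ ∑ i ∈ Finset.range N, pnorm ((w.coeff i) • (a * X ^ i)) := pnorm_sum_le _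
    _ = ∑ i ∈ Finset.range N, ‖w.coeff i‖ * pnorm a := by
        refine Finset.sum_congr rfl fun i _ => ?_
        rw [pnorm_smul, pnorm_mul_X_pow]
    _ = (∑ i ∈ Finset.range N, ‖w.coeff i‖) * pnorm a := by rw [← Finset.sum_mul]
    _ ≤ (Real.sqrt N * pnorm w) * pnorm a := by
        exact mul_le_mul_of_nonneg_right (sum_abs_coeff_le w N h) (pnorm_nonneg a)
    _ = Real.sqrt N * (pnorm a * pnorm w) := by ring

lemma two_cs (a b x y : ℝ) (ha : 0 ≤ a) (hb : 0 ≤ b) (hx : 0 ≤ x) (hy : 0 ≤ y) :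
    a * x + b * y ≤ Real.sqrt (a ^ 2 + b ^ 2) * Real.sqrt (x ^ 2 + y ^ 2) := by
  have h1 : Real.sqrt (a ^ 2 + b ^ 2) ^ 2 = a ^ 2 + b ^ 2 := Real.sq_sqrt (by positivity)
  have h2 : Real.sqrt (x ^ 2 + y ^ 2) ^ 2 = x ^ 2 + y ^ 2 := Real.sq_sqrt (by positivity)
  have hs : 0 ≤ Real.sqrt (a ^ 2 + b ^ 2) := Real.sqrt_nonneg _
  have ht : 0 ≤ Real.sqrt (x ^ 2 + y ^ 2) := Real.sqrt_nonneg _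
  nlinarith [sq_nonneg (a * y - b * x), mul_nonneg hs ht,
    sq_nonneg (Real.sqrt (a ^ 2 + b ^ 2) * Real.sqrt (x ^ 2 + y ^ 2) - (a * x + b * y))]

lemma key_bound (a b w v : ℂ[X]) (M : ℕ) (hw : w.natDegree < M) (hv : v.natDegree < M) :
    pnorm (a * w - b * v) ≤ Real.sqrt M * (pairNorm a b * pairNorm w v) := by
  have h1 := pnorm_mul_le a w M hw
  have h2 := pnorm_mul_le b v M hv
  have h3 := pnorm_sub_le (a * w) (b * v)
  have hcs := two_cs (pnorm a) (pnorm b) (pnorm w) (pnorm v)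
    (pnorm_nonneg a) (pnorm_nonneg b) (pnorm_nonneg w) (pnorm_nonneg v)
  have hpa : pairNorm a b = Real.sqrt (pnorm a ^ 2 + pnorm b ^ 2) := by
    rw [pairNorm, pnorm_sq, pnorm_sq]
  have hpw : pairNorm w v = Real.sqrt (pnorm w ^ 2 + pnorm v ^ 2) := by
    rw [pairNorm, pnorm_sq, pnorm_sq]
  have hsqN : (0:ℝ) ≤ Real.sqrt M := Real.sqrt_nonneg _
  rw [hpa, hpw]
  nlinarith [hcs, hsqN]

/-- A unit vector of V_k minimizing ‖S_k(p,q)(·)‖ has small image under S_k(p̃,q̃). -/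
theorem minimizer_small_residual (m n k : ℕ) (hm : 1 ≤ m) (hn : 1 ≤ n)
    (hk1 : 1 ≤ k) (hk : k ≤ min m n)
    (pt qt : ℂ[X]) (hpt : (pt, qt) ∈ Pmnk m n k)
    (ε : ℝ) (hε : 0 < ε)
    (p q : ℂ[X]) (hpq : (p, q) ∈ Cmn m n)
    (hclose : pairNorm (p - pt) (q - qt) < ε)
    (wv : ℂ[X] × ℂ[X]) (hwv : wv ∈ Vspace m n k)
    (hunit : pairNorm wv.1 wv.2 = 1)
    (hmin : ∀ wv' : ℂ[X] × ℂ[X], wv' ∈ Vspace m n k → pairNorm wv'.1 wv'.2 = 1 →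
      pnorm (p * wv.1 - q * wv.2) ≤ pnorm (p * wv'.1 - q * wv'.2)) :
    pnorm (pt * wv.1 - qt * wv.2) < 2 * ε * Real.sqrt ((max m n - k + 1 : ℕ)) := by
  obtain ⟨⟨hdegpt, hdegqt⟩, hgcd⟩ := hpt
  simp only at hdegpt hdegqt hgcd
  have hkm : k ≤ m := hk.trans (min_le_left m n)
  have hkn : k ≤ n := hk.trans (min_le_right m n)
  set M : ℕ := max m n - k + 1 with hM
  have hnkM : n - k < M := by
    have := Nat.sub_le_sub_right (le_max_right m n) k; omega
  have hmkM : m - k < M := by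
    have := Nat.sub_le_sub_right (le_max_left m n) k; omega
  have hMpos : (0:ℝ) < Real.sqrt M := Real.sqrt_pos.mpr (by positivity)
  -- gcd structure
  have hptne : pt ≠ 0 := fun h => by simp [h] at hdegpt
  have hqtne : qt ≠ 0 := fun h => by simp [h] at hdegqt
  set g := EuclideanDomain.gcd pt qt with hg
  have hgne : g ≠ 0 := fun h => hptne (EuclideanDomain.gcd_eq_zero_iff.mp h).1
  obtain ⟨p', hp'⟩ := EuclideanDomain.gcd_dvd_left pt qt
  obtain ⟨q', hq'⟩ := EuclideanDomain.gcd_dvd_right pt qt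
  have hp'ne : p' ≠ 0 := by rintro rfl; simp at hp'; exact hptne hp'
  have hq'ne : q' ≠ 0 := by rintro rfl; simp at hq'; exact hqtne hq'
  have hgdeg : g.natDegree = k := hgcd
  have hptD : pt.natDegree = m := natDegree_eq_of_degree_eq_some hdegpt
  have hqtD : qt.natDegree = n := natDegree_eq_of_degree_eq_some hdegqt
  have hp'deg : p'.natDegree = m - k := by
    have := Polynomial.natDegree_mul hgne hp'ne
    rw [← hp'] at this; omega
  have hq'deg : q'.natDegree = n - k := by
    have := Polynomial.natDegree_mul hgne hq'ne
    rw [← hq'] at this; omega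
  -- the normalized kernel vector
  set c : ℝ := pairNorm q' p' with hc
  have hcpos : 0 < c := Real.sqrt_pos.mpr
    (lt_of_lt_of_le (pnormSq_pos q' hq'ne) (le_add_of_nonneg_right (pnormSq_nonneg p')))
  set z : ℂ := ((c⁻¹ : ℝ) : ℂ) with hz
  have hznorm : ‖z‖ = c⁻¹ := by
    rw [hz, Complex.norm_real, Real.norm_eq_abs, abs_of_pos (inv_pos.mpr hcpos)]
  set wv' : ℂ[X] × ℂ[X] := (z • q', z • p') with hwv'
  have hmem : wv' ∈ Vspace m n k := by
    constructor
    · refine Polynomial.mem_degreeLE.mpr ((Polynomial.degree_smul_le z q').trans ?_)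
      rw [Polynomial.degree_eq_natDegree hq'ne, hq'deg]
    · refine Polynomial.mem_degreeLE.mpr ((Polynomial.degree_smul_le z p').trans ?_)
      rw [Polynomial.degree_eq_natDegree hp'ne, hp'deg]
  have hunit' : pairNorm wv'.1 wv'.2 = 1 := by
    show pairNorm (z • q') (z • p') = 1
    rw [pairNorm, pnormSq_smul, pnormSq_smul, ← mul_add,
      Real.sqrt_mul (sq_nonneg _), Real.sqrt_sq (norm_nonneg z), hznorm]
    rw [hc] at *
    rw [pairNorm]
    exact inv_mul_cancel₀ hcpos.ne'
  -- image rewriting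
  have hcross : pt * q' = qt * p' := by
    conv_lhs => rw [hp']
    conv_rhs => rw [hq']
    ring
  have hker : (p - pt) * q' - (q - qt) * p' = p * q' - q * p' := by
    linear_combination -hcross
  have himage : p * wv'.1 - q * wv'.2 = z • ((p - pt) * q' - (q - qt) * p') := by
    show p * (z • q') - q * (z • p') = _
    rw [hker, smul_sub, mul_smul_comm, mul_smul_comm]
  set D : ℝ := pairNorm (p - pt) (q - qt) with hD
  have hDnn : 0 ≤ D := Real.sqrt_nonneg _
  have h5 : pnorm ((p - pt) * q' - (q - qt) * p') ≤ Real.sqrt M * (D * c) := by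
    have := key_bound (p - pt) (q - qt) q' p' M (by omega) (by omega)
    rwa [← hc, ← hD] at this
  have h6 : pnorm (p * wv'.1 - q * wv'.2) ≤ Real.sqrt M * D := by
    rw [himage, pnorm_smul, hznorm]
    calc c⁻¹ * pnorm ((p - pt) * q' - (q - qt) * p')
        ≤ c⁻¹ * (Real.sqrt M * (D * c)) := by
          exact mul_le_mul_of_nonneg_left h5 (inv_nonneg.mpr hcpos.le)
      _ = Real.sqrt M * D := by field_simp
  have h7 : pnorm (p * wv.1 - q * wv.2) ≤ Real.sqrt M * D :=
    (hmin wv' hmem hunit').trans h6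
  -- bound for the perturbation applied to wv
  have hw1 : wv.1.natDegree < M := by
    have := Polynomial.natDegree_le_iff_degree_le.mpr (Polynomial.mem_degreeLE.mp hwv.1)
    omega
  have hw2 : wv.2.natDegree < M := by
    have := Polynomial.natDegree_le_iff_degree_le.mpr (Polynomial.mem_degreeLE.mp hwv.2)
    omega
  have h8 : pnorm ((p - pt) * wv.1 - (q - qt) * wv.2) ≤ Real.sqrt M * D := by
    have := key_bound (p - pt) (q - qt) wv.1 wv.2 M hw1 hw2
    rw [← hD, hunit, mul_one] at this
    exact this
  have hdecomp : pt * wv.1 - qt * wv.2 =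
      (p * wv.1 - q * wv.2) - ((p - pt) * wv.1 - (q - qt) * wv.2) := by ring
  calc pnorm (pt * wv.1 - qt * wv.2)
      ≤ pnorm (p * wv.1 - q * wv.2) + pnorm ((p - pt) * wv.1 - (q - qt) * wv.2) := by
        rw [hdecomp]; exact pnorm_sub_le _ _
    _ ≤ Real.sqrt M * D + Real.sqrt M * D := add_le_add h7 h8
    _ = 2 * Real.sqrt M * D := by ring
    _ < 2 * Real.sqrt M * ε := by
        have : D < ε := hclose
        nlinarith
    _ = 2 * ε * Real.sqrt ((max m n - k + 1 : ℕ)) := by rw [hM]; ring
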